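/- arXiv:1311.7690 — 3 statements merged into one kernel-verified Lean document; each statement's English description precedes it below -/
import Mathlib

section
/- For any two fixed-point-free involutions f and g on a set of size 2n, the disjoint cycles of the product f∘g have lengths that come in pairs: there exists a partition λ of n such that the cycle type of f∘g is (λ₁,λ₁,λ₂,λ₂,…,λ_k,λ_k). -/
/-!
Write `σ = f * g`. Conjugation by `f` inverts `σ`, so `c ↦ f * c⁻¹ * f⁻¹` is an involution on
the cycles of `σ` preserving their lengths, and `f` is an involution on the fixed points of `σ`.
Neither involution has a fixed point: if `f * c * f⁻¹ = c⁻¹` for a cycle `c`, then `f` acts on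
the support of `c` as a reflection `cᵗ x ↦ cᵏ⁻ᵗ x`, which fixes a point either of `f` or of
`f * c`, and `f * c` agrees with `g = f * σ` there. So every part of the full cycle type occurs
an even number of times, i.e. it is `M + M`, and `M` sums to half of `2 * n`.
-/

/-- The full cycle type of a permutation: the usual cycle type (cycles of
length ≥ 2) together with one part `1` for each fixed point. -/
def fullCycleType {α : Type*} [Fintype α] [DecidableEq α] (f : Equiv.Perm α) : Multiset ℕ :=
  f.cycleType + Multiset.replicate (Finset.univ.filter fun x => f x = x).card 1

open Equiv Finset

theorem Finset.even_card_of_involution {ι : Type*} {s : Finset ι} (i : ι → ι)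
    (hmem : ∀ a ∈ s, i a ∈ s) (hinv : ∀ a ∈ s, i (i a) = a) (hne : ∀ a ∈ s, i a ≠ a) :
    Even #s := by
  rw [← ZMod.natCast_eq_zero_iff_even, card_eq_sum_ones, Nat.cast_sum, Nat.cast_one]
  exact sum_involution (fun a _ => i a) (fun _ _ => by decide) (fun a ha _ => hne a ha) hmem hinv

theorem Multiset.exists_eq_add_self_of_even_count {α : Type*} [DecidableEq α] (M : Multiset α)
    (h : ∀ a, Even (M.count a)) : ∃ N, M = N + N := by
  refine ⟨∑ a ∈ M.toFinset, (M.count a / 2) • {a}, ?_⟩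
  rw [← sum_add_distrib]
  conv_lhs => rw [← Multiset.toFinset_sum_count_nsmul_eq M]
  refine sum_congr rfl fun a _ => ?_
  rw [← add_nsmul, ← two_mul, Nat.mul_div_cancel' (h a).two_dvd]

theorem conj_mul_eq_inv_of_mul_self_eq_one {G : Type*} [Group G] {a b : G} (ha : a * a = 1)
    (hb : b * b = 1) : a * (a * b) * a⁻¹ = (a * b)⁻¹ := by
  rw [inv_eq_of_mul_eq_one_right ha, mul_inv_rev, inv_eq_of_mul_eq_one_right ha,
    inv_eq_of_mul_eq_one_right hb, ← mul_assoc, ha, one_mul]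

namespace Equiv.Perm

variable {α : Type*} [Fintype α] [DecidableEq α]

theorem inv_mem_cycleFactorsFinset_inv {σ c : Perm α} (h : c ∈ σ.cycleFactorsFinset) :
    c⁻¹ ∈ σ⁻¹.cycleFactorsFinset := by
  rw [mem_cycleFactorsFinset_iff] at h ⊢
  refine ⟨h.1.inv, fun x hx => ?_⟩
  rw [support_inv] at hx
  have hx' : c⁻¹ x ∈ c.support := by rwa [← support_inv, apply_mem_support, support_inv]
  rw [eq_comm, inv_eq_iff_eq, ← h.2 _ hx']
  exact (c.apply_symm_apply x).symm

theorem IsCycle.exists_fixed_of_conj_eq_inv {f c : Perm α} (hc : c.IsCycle)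
    (hfc : f * c * f⁻¹ = c⁻¹) : ∃ y ∈ c.support, f y = y ∨ f (c y) = y := by
  have hcomm (t : ℤ) : f * c ^ t = c ^ (-t) * f := by
    rw [zpow_neg, ← inv_zpow, ← hfc, conj_zpow, inv_mul_cancel_right]
  obtain ⟨x, hx⟩ := hc.nonempty_support
  have hfx : f x ∈ c.support := by
    rw [← support_inv, ← hfc, support_conj]
    exact mem_map_of_mem _ hx
  obtain ⟨k, hk⟩ := hc.sameCycle (mem_support.1 hx) (mem_support.1 hfx)
  have hf_orbit (t : ℤ) : f ((c ^ t) x) = (c ^ (k - t)) x := by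
    rw [← mul_apply, hcomm, mul_apply, ← hk, ← mul_apply, ← zpow_add, neg_add_eq_sub]
  obtain ⟨t, rfl | rfl⟩ := Int.even_or_odd' k
  · refine ⟨(c ^ t) x, zpow_apply_mem_support.2 hx, Or.inl ?_⟩
    rw [hf_orbit]; congr 2; ring
  · refine ⟨(c ^ t) x, zpow_apply_mem_support.2 hx, Or.inr ?_⟩
    rw [← mul_apply c, ← zpow_one_add, hf_orbit]; congr 2; ring

variable {f g : Perm α}

theorem even_count_cycleType_mul (hf : f * f = 1) (hf' : ∀ x, f x ≠ x) (hg : g * g = 1)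
    (hg' : ∀ x, g x ≠ x) (ℓ : ℕ) : Even ((f * g).cycleType.count ℓ) := by
  set σ := f * g with hσ_def
  have hσ : f * σ * f⁻¹ = σ⁻¹ := conj_mul_eq_inv_of_mul_self_eq_one hf hg
  have hσ' : f * σ⁻¹ * f⁻¹ = σ := by simpa only [conj_inv, inv_inv] using congrArg (·⁻¹) hσ
  have hfinv : f⁻¹ = f := inv_eq_of_mul_eq_one_right hf
  rw [cycleType_def, Multiset.count_map]
  refine even_card_of_involution (s := {c ∈ σ.cycleFactorsFinset | ℓ = (card ∘ support) c})
    (fun c => f * c⁻¹ * f⁻¹) (fun c hc => ?_) (fun c _ => ?_) (fun c hc hfix => ?_)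
  · rw [mem_filter] at hc ⊢
    refine ⟨?_, by simp [hc.2]⟩
    rw [← hσ', mem_cycleFactorsFinset_conj]
    exact inv_mem_cycleFactorsFinset_inv hc.1
  · simp only [hfinv, mul_inv_rev, inv_inv, ← mul_assoc, hf, one_mul]
    rw [mul_assoc, hf, mul_one]
  · have hc' := mem_cycleFactorsFinset_iff.1 (mem_filter.1 hc).1
    have hconj : f * c * f⁻¹ = c⁻¹ := by simpa only [conj_inv, inv_inv] using congrArg (·⁻¹) hfix
    obtain ⟨y, hy, hfy | hfcy⟩ := hc'.1.exists_fixed_of_conj_eq_inv hconj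
    · exact hf' y hfy
    · apply hg' y
      rwa [hc'.2 y hy, hσ_def, mul_apply, ← mul_apply f, hf, one_apply] at hfcy

theorem even_card_fixedPoints_mul (hf : f * f = 1) (hf' : ∀ x, f x ≠ x) (hg : g * g = 1) :
    Even #{x | (f * g) x = x} := by
  have hσ : f * (f * g) = (f * g)⁻¹ * f :=
    mul_inv_eq_iff_eq_mul.1 (conj_mul_eq_inv_of_mul_self_eq_one hf hg)
  have hff (x : α) : f (f x) = x := by rw [← mul_apply, hf, one_apply]
  refine even_card_of_involution f (fun x hx => ?_) (fun x _ => hff x) (fun x _ => hf' x)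
  rw [mem_filter] at hx ⊢
  refine ⟨mem_univ _, ?_⟩
  have := congrArg (· x) hσ
  simp only [mul_apply, hx.2] at this
  exact (inv_eq_iff_eq.1 this.symm).symm

end Equiv.Perm

theorem sum_fullCycleType {α : Type*} [Fintype α] [DecidableEq α] (σ : Equiv.Perm α) :
    (fullCycleType σ).sum = Fintype.card α := by
  have hfix : #{x | σ x = x} = Fintype.card α - #σ.support := by
    rw [← card_compl]; congr; ext; simp
  rw [fullCycleType, hfix]
  exact σ.partition.parts_sum

theorem even_count_fullCycleType_mul {α : Type*} [Fintype α] [DecidableEq α] {f g : Equiv.Perm α}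
    (hf : f * f = 1) (hf' : ∀ x, f x ≠ x) (hg : g * g = 1) (hg' : ∀ x, g x ≠ x) (ℓ : ℕ) :
    Even ((fullCycleType (f * g)).count ℓ) := by
  rw [fullCycleType, Multiset.count_add, Multiset.count_replicate]
  refine (Equiv.Perm.even_count_cycleType_mul hf hf' hg hg' ℓ).add ?_
  split_ifs
  exacts [Equiv.Perm.even_card_fixedPoints_mul hf hf' hg, Even.zero]

/-- For any two fixed-point-free involutions `f`, `g` on a set of size `2n`, the cycle
lengths of `f * g` come in pairs: the (full) cycle type of `f * g` is `λλ` for some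
partition `λ` of `n`. -/
theorem stmt_0 (n : ℕ) (f g : Equiv.Perm (Fin (2 * n)))
    (hf : f * f = 1) (hf' : ∀ x, f x ≠ x)
    (hg : g * g = 1) (hg' : ∀ x, g x ≠ x) :
    ∃ M : Multiset ℕ, M.sum = n ∧ fullCycleType (f * g) = M + M := by
  obtain ⟨M, hM⟩ := Multiset.exists_eq_add_self_of_even_count _
    (even_count_fullCycleType_mul hf hf' hg hg')
  refine ⟨M, ?_, hM⟩
  have hsum := sum_fullCycleType (f * g)
  rw [hM, Multiset.sum_add, Fintype.card_fin] at hsum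
  omega
end

section
/- Let f₁ = (1 n̂)(2 1̂)⋯(n n−1̂), f₂ = (1 1̂)(2 2̂)⋯(n n̂), and let f₃ be any perfect pairing of [n] ∪ [n̂]. For a block structure as in the paper's partitioned hypermaps, consider the directed graph on blocks where a block B₂ of a partition π₂ (stable under f₂ and f₃) points to the block B₁ of a partition π₁ (stable under f₁ and f₃) containing the maximum hat element of B₂, and a block B₁ of π₁ not containing 1 points to the block B₂ of π₂ containing the maximum non-hat element of B₁. Then if a block B₂ of π₂ with maximum hat element m ≠ n̂ is a descendant of a block B₁ of π₁, and B₂' is the block of π₂ that is the ascendant of B₁ (i.e., B₂' contains the maximum non-hat element of B₁), then the maximum hat element of B₂' is strictly larger than m. -/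
/-! The element `m̂ ∈ B₁` is paired by `f₁` with `m + 1`, which is non-hat because `m̂ ≠ n̂`;
so the maximum non-hat element `w` of `B₁` is at least `m + 1 > m`. Since `B₂'` is stable
under `f₂`, it contains `ŵ` along with `w`, hence its maximum hat element is at least `w`. -/

theorem Fin.lt_add_one_of_val_add_one_ne {n : ℕ} [NeZero n] {m : Fin n}
    (h : (m : ℕ) + 1 ≠ n) : m < m + 1 := by
  have hlt : (m : ℕ) + 1 < n := lt_of_le_of_ne m.isLt h
  rw [Fin.lt_def, Fin.val_add_one_of_lt' hlt]
  exact Nat.lt_succ_self m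

theorem inl_add_one_mem_of_inr_mem {n : ℕ} [NeZero n] {f : Equiv.Perm (Fin n ⊕ Fin n)}
    (hf : ∀ i : Fin n, f (Sum.inl i) = Sum.inr (i - 1)) (hff : f * f = 1)
    {B : Finset (Fin n ⊕ Fin n)} (hB : ∀ x ∈ B, f x ∈ B) {m : Fin n}
    (hm : Sum.inr m ∈ B) : Sum.inl (m + 1) ∈ B := by
  have hpair : f (Sum.inr m) = Sum.inl (m + 1) := by
    rw [← add_sub_cancel_right m 1, ← hf, ← Equiv.Perm.mul_apply, hff, sub_add_cancel,
      Equiv.Perm.one_apply]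
  exact hpair ▸ hB _ hm

theorem stmt_10_general (n : ℕ) [NeZero n] (f₁ f₃ : Equiv.Perm (Fin n ⊕ Fin n))
    (h₁ : ∀ i : Fin n, f₁ (Sum.inl i) = Sum.inr (i - 1)) (h₁inv : f₁ * f₁ = 1)
    (π₁ π₂ : Finpartition (Finset.univ : Finset (Fin n ⊕ Fin n)))
    (hπ₁ : ∀ B ∈ π₁.parts, ∀ x ∈ B, f₁ x ∈ B ∧ f₃ x ∈ B)
    (hπ₂ : ∀ B ∈ π₂.parts, ∀ x ∈ B,
      (Equiv.sumComm (Fin n) (Fin n) : Equiv.Perm (Fin n ⊕ Fin n)) x ∈ B ∧ f₃ x ∈ B)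
    (B₁ : Finset (Fin n ⊕ Fin n)) (hB₁ : B₁ ∈ π₁.parts)
    (B₂' : Finset (Fin n ⊕ Fin n)) (hB₂' : B₂' ∈ π₂.parts)
    (m : Fin n)
    (hmn : (m : ℕ) + 1 ≠ n)
    (hdesc : Sum.inr m ∈ B₁)
    (w : Fin n) (hwmax : ∀ i, Sum.inl i ∈ B₁ → i ≤ w)
    (hasc : Sum.inl w ∈ B₂')
    (m' : Fin n) (hm'max : ∀ j, Sum.inr j ∈ B₂' → j ≤ m') :
    m < m' := by
  have hsucc : Sum.inl (m + 1) ∈ B₁ :=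
    inl_add_one_mem_of_inr_mem h₁ h₁inv (fun x hx => (hπ₁ B₁ hB₁ x hx).1) hdesc
  have hw_hat : Sum.inr w ∈ B₂' := (hπ₂ B₂' hB₂' _ hasc).1
  calc m < m + 1 := Fin.lt_add_one_of_val_add_one_ne hmn
    _ ≤ w := hwmax _ hsucc
    _ ≤ m' := hm'max w hw_hat

/-- Setting: the ground set `[n] ∪ [n̂]` is `Fin n ⊕ Fin n` (zero-indexed; element `i+1`
is `Sum.inl i` and `(i+1)̂` is `Sum.inr i`).  `f₁` is the pairing `i ↔ (i−1)̂`
(cyclically), `f₂` is the swap of the two copies, and `f₃` is any perfect pairing.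
`π₁` is stable under `f₁, f₃` and `π₂` under `f₂, f₃`.  If a block `B₂` of `π₂` with
maximum hat element `m̂ ≠ n̂` is a descendant of a block `B₁` of `π₁` (i.e. `m̂ ∈ B₁`),
and `B₂'` is the block of `π₂` containing the maximum non-hat element of `B₁`, then the
maximum hat element of `B₂'` is strictly larger than `m̂`. -/
theorem stmt_10 (n : ℕ) [NeZero n] (f₁ f₃ : Equiv.Perm (Fin n ⊕ Fin n))
    (h₁ : ∀ i : Fin n, f₁ (Sum.inl i) = Sum.inr (i - 1)) (h₁inv : f₁ * f₁ = 1)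
    (h₃inv : f₃ * f₃ = 1) (h₃fpf : ∀ x, f₃ x ≠ x)
    (π₁ π₂ : Finpartition (Finset.univ : Finset (Fin n ⊕ Fin n)))
    (hπ₁ : ∀ B ∈ π₁.parts, ∀ x ∈ B, f₁ x ∈ B ∧ f₃ x ∈ B)
    (hπ₂ : ∀ B ∈ π₂.parts, ∀ x ∈ B,
      (Equiv.sumComm (Fin n) (Fin n) : Equiv.Perm (Fin n ⊕ Fin n)) x ∈ B ∧ f₃ x ∈ B)
    (B₁ : Finset (Fin n ⊕ Fin n)) (hB₁ : B₁ ∈ π₁.parts)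
    (B₂ : Finset (Fin n ⊕ Fin n)) (hB₂ : B₂ ∈ π₂.parts)
    (B₂' : Finset (Fin n ⊕ Fin n)) (hB₂' : B₂' ∈ π₂.parts)
    (m : Fin n) (hm : Sum.inr m ∈ B₂) (hmmax : ∀ j, Sum.inr j ∈ B₂ → j ≤ m)
    (hmn : (m : ℕ) + 1 ≠ n)
    (hdesc : Sum.inr m ∈ B₁)
    (w : Fin n) (hw : Sum.inl w ∈ B₁) (hwmax : ∀ i, Sum.inl i ∈ B₁ → i ≤ w)
    (hasc : Sum.inl w ∈ B₂')
    (m' : Fin n) (hm' : Sum.inr m' ∈ B₂') (hm'max : ∀ j, Sum.inr j ∈ B₂' → j ≤ m') :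
    m < m' :=
  stmt_10_general n f₁ f₃ h₁ h₁inv π₁ π₂ hπ₁ hπ₂ B₁ hB₁ B₂' hB₂' m hmn hdesc w hwmax hasc m' hm'max
end

section
/- The ascendant/descendant relation on the blocks of a partitioned locally orientable hypermap (a black block descends from the white block containing its maximum half-edge label, a white block not containing 1 descends from the black block containing its maximum half-edge label) defines a tree structure rooted at the white block containing the label 1. -/
/-!
Rank a white block by its largest non-hat label `m` as `(m, 0)` and a black block by its
largest hat label `m` as `(m, 1)`, ordered lexicographically. A non-root white block with
maximum `m` contains `m`, hence its parent contains `m` and, being `f₂`-stable, also `m̂`: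
the rank goes up. A black block with maximum `m̂` has a parent containing `m̂`, hence
`f₁ m̂ = m + 1`: either `m + 1` wraps around to the label `1` (`Sum.inl 0`) and the parent
is the root, or the rank goes up again. Since ranks live in a finite order, iterating the
parent map must reach the root.
-/

theorem Function.exists_iterate_eq_of_lt_apply {α β : Type*} [Preorder β] [WellFoundedGT β]
    {f : α → α} {r : α} (μ : α → β) (hf : ∀ v ≠ r, f v = r ∨ μ v < μ (f v)) (v : α) :
    ∃ k, f^[k] v = r := by
  induction v using (InvImage.wf μ wellFounded_gt).induction with
  | _ v ih =>
    by_cases hv : v = r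
    · exact ⟨0, hv⟩
    rcases hf v hv with hroot | hlt
    · exact ⟨1, hroot⟩
    · obtain ⟨k, hk⟩ := ih (f v) hlt
      exact ⟨k + 1, by rwa [Function.iterate_succ_apply]⟩

theorem Fin.add_one_eq_zero_or_lt_add_one {n : ℕ} [NeZero n] (m : Fin n) :
    m + 1 = 0 ∨ m < m + 1 := by
  obtain ⟨k, rfl⟩ := Nat.exists_eq_succ_of_ne_zero (NeZero.ne n)
  rcases (Fin.le_last m).eq_or_lt with hm | hm
  · exact Or.inl (hm ▸ Fin.last_add_one k)
  · exact Or.inr (Fin.lt_add_one_iff.2 hm)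

namespace Hypermap

variable {n : ℕ} [NeZero n]

theorem apply_inr_of_mul_self_eq_one {f₁ : Equiv.Perm (Fin n ⊕ Fin n)}
    (h₁ : ∀ i : Fin n, f₁ (Sum.inl i) = Sum.inr (i - 1)) (h₁inv : f₁ * f₁ = 1) (j : Fin n) :
    f₁ (Sum.inr j) = Sum.inl (j + 1) := by
  rw [← add_sub_cancel_right j 1, ← h₁, ← Equiv.Perm.mul_apply, h₁inv, add_sub_cancel_right,
    Equiv.Perm.one_apply]

noncomputable def maxInl (s : Finset (Fin n ⊕ Fin n)) : Fin n :=
  s.sup (Sum.elim id ⊥)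

noncomputable def maxInr (s : Finset (Fin n ⊕ Fin n)) : Fin n :=
  s.sup (Sum.elim ⊥ id)

variable {s : Finset (Fin n ⊕ Fin n)} {m : Fin n}

theorem le_maxInl (h : Sum.inl m ∈ s) : m ≤ maxInl s :=
  Finset.le_sup (f := Sum.elim id ⊥) h

theorem le_maxInr (h : Sum.inr m ∈ s) : m ≤ maxInr s :=
  Finset.le_sup (f := Sum.elim ⊥ id) h

theorem maxInl_le (h : ∀ i, Sum.inl i ∈ s → i ≤ m) : maxInl s ≤ m :=
  Finset.sup_le fun x hx => match x with
    | .inl i => h i hx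
    | .inr _ => bot_le

theorem maxInr_le (h : ∀ j, Sum.inr j ∈ s → j ≤ m) : maxInr s ≤ m :=
  Finset.sup_le fun x hx => match x with
    | .inl _ => bot_le
    | .inr j => h j hx

theorem maxInl_le_maxInr {w b : Finset (Fin n ⊕ Fin n)}
    (hmax : ∀ i, Sum.inl i ∈ w → i ≤ m) (hmb : Sum.inl m ∈ b)
    (hb : ∀ x ∈ b, (Equiv.sumComm (Fin n) (Fin n) : Equiv.Perm (Fin n ⊕ Fin n)) x ∈ b) :
    maxInl w ≤ maxInr b :=
  (maxInl_le hmax).trans (le_maxInr (hb _ hmb))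

theorem zero_mem_or_maxInr_lt_maxInl {f₁ : Equiv.Perm (Fin n ⊕ Fin n)}
    (hf₁ : f₁ (Sum.inr m) = Sum.inl (m + 1)) {w b : Finset (Fin n ⊕ Fin n)}
    (hmax : ∀ j, Sum.inr j ∈ b → j ≤ m) (hmw : Sum.inr m ∈ w) (hw : ∀ x ∈ w, f₁ x ∈ w) :
    Sum.inl 0 ∈ w ∨ maxInr b < maxInl w := by
  have hsucc : Sum.inl (m + 1) ∈ w := hf₁ ▸ hw _ hmw
  rcases m.add_one_eq_zero_or_lt_add_one with hwrap | hlt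
  · exact .inl (hwrap ▸ hsucc)
  · exact .inr ((maxInr_le hmax).trans_lt (hlt.trans_le (le_maxInl hsucc)))

end Hypermap

open Hypermap in
theorem stmt_11_general (n : ℕ) [NeZero n] (f₁ f₃ : Equiv.Perm (Fin n ⊕ Fin n))
    (h₁ : ∀ i : Fin n, f₁ (Sum.inl i) = Sum.inr (i - 1)) (h₁inv : f₁ * f₁ = 1)
    (π₁ π₂ : Finpartition (Finset.univ : Finset (Fin n ⊕ Fin n)))
    (hπ₁ : ∀ B ∈ π₁.parts, ∀ x ∈ B, f₁ x ∈ B ∧ f₃ x ∈ B)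
    (hπ₂ : ∀ B ∈ π₂.parts, ∀ x ∈ B,
      (Equiv.sumComm (Fin n) (Fin n) : Equiv.Perm (Fin n ⊕ Fin n)) x ∈ B ∧ f₃ x ∈ B)
    (R : Finset (Fin n ⊕ Fin n)) (hR : R ∈ π₁.parts) (hR0 : Sum.inl 0 ∈ R)
    (parent : ({B // B ∈ π₁.parts} ⊕ {B // B ∈ π₂.parts}) →
      ({B // B ∈ π₁.parts} ⊕ {B // B ∈ π₂.parts}))
    (hparentB : ∀ b : {B // B ∈ π₂.parts}, ∃ (w : {B // B ∈ π₁.parts}) (m : Fin n),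
      Sum.inr m ∈ b.val ∧ (∀ j, Sum.inr j ∈ b.val → j ≤ m) ∧ Sum.inr m ∈ w.val ∧
        parent (Sum.inr b) = Sum.inl w)
    (hparentW : ∀ w : {B // B ∈ π₁.parts}, Sum.inl 0 ∉ w.val →
      ∃ (b : {B // B ∈ π₂.parts}) (m : Fin n),
        Sum.inl m ∈ w.val ∧ (∀ i, Sum.inl i ∈ w.val → i ≤ m) ∧ Sum.inl m ∈ b.val ∧
          parent (Sum.inl w) = Sum.inr b) :
    ∀ v, ∃ k : ℕ, parent^[k] v = Sum.inl ⟨R, hR⟩ := by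
  have hf₁ := apply_inr_of_mul_self_eq_one h₁ h₁inv
  have eq_root (w : {B // B ∈ π₁.parts}) (h : Sum.inl 0 ∈ w.val) : w = ⟨R, hR⟩ :=
    Subtype.ext (π₁.eq_of_mem_parts w.2 hR h hR0)
  intro v
  refine Function.exists_iterate_eq_of_lt_apply
    (Sum.elim (fun w => toLex (maxInl w.val, false)) fun b => toLex (maxInr b.val, true))
    ?_ v
  rintro (w | b) hv
  · have h0 : Sum.inl 0 ∉ w.val := fun h => hv (congrArg Sum.inl (eq_root w h))
    obtain ⟨b, m, -, hmax, hmb, hp⟩ := hparentW w h0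
    rw [hp]
    exact .inr <| Prod.Lex.toLex_lt_toLex'.2
      ⟨maxInl_le_maxInr hmax hmb fun x hx => (hπ₂ b.val b.2 x hx).1,
        fun _ => Bool.false_lt_true⟩
  · obtain ⟨w, m, -, hmax, hmw, hp⟩ := hparentB b
    rw [hp]
    rcases zero_mem_or_maxInr_lt_maxInl (hf₁ m) hmax hmw
      (fun x hx => (hπ₁ w.val w.2 x hx).1) with h0 | hlt
    · exact .inl (congrArg Sum.inl (eq_root w h0))
    · exact .inr (Prod.Lex.toLex_lt_toLex.2 (.inl hlt))

/-- The ascendant/descendant relation on the blocks of a partitioned locally orientable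
hypermap `(f₃, π₁, π₂)` defines a tree structure rooted at the white block containing
the label `1`.  Here the ground set `[n] ∪ [n̂]` is `Fin n ⊕ Fin n` (zero-indexed, so
label `1` is `Sum.inl 0`), `f₁` is the pairing `i ↔ (i−1)̂` (cyclically), `f₂` is the
swap of the two copies, `f₃` is a perfect pairing, `π₁` (white blocks) is stable under
`f₁, f₃` and `π₂` (black blocks) is stable under `f₂, f₃`.  The parent of a black block
is the white block containing its maximum hat element; the parent of a white block not
containing `1` is the black block containing its maximum non-hat element.  Iterating
the parent map from any block reaches the root. -/
theorem stmt_11 (n : ℕ) [NeZero n] (f₁ f₃ : Equiv.Perm (Fin n ⊕ Fin n))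
    (h₁ : ∀ i : Fin n, f₁ (Sum.inl i) = Sum.inr (i - 1)) (h₁inv : f₁ * f₁ = 1)
    (h₃inv : f₃ * f₃ = 1) (h₃fpf : ∀ x, f₃ x ≠ x)
    (π₁ π₂ : Finpartition (Finset.univ : Finset (Fin n ⊕ Fin n)))
    (hπ₁ : ∀ B ∈ π₁.parts, ∀ x ∈ B, f₁ x ∈ B ∧ f₃ x ∈ B)
    (hπ₂ : ∀ B ∈ π₂.parts, ∀ x ∈ B,
      (Equiv.sumComm (Fin n) (Fin n) : Equiv.Perm (Fin n ⊕ Fin n)) x ∈ B ∧ f₃ x ∈ B)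
    (R : Finset (Fin n ⊕ Fin n)) (hR : R ∈ π₁.parts) (hR0 : Sum.inl 0 ∈ R)
    (parent : ({B // B ∈ π₁.parts} ⊕ {B // B ∈ π₂.parts}) →
      ({B // B ∈ π₁.parts} ⊕ {B // B ∈ π₂.parts}))
    (hparentB : ∀ b : {B // B ∈ π₂.parts}, ∃ (w : {B // B ∈ π₁.parts}) (m : Fin n),
      Sum.inr m ∈ b.val ∧ (∀ j, Sum.inr j ∈ b.val → j ≤ m) ∧ Sum.inr m ∈ w.val ∧
        parent (Sum.inr b) = Sum.inl w)
    (hparentW : ∀ w : {B // B ∈ π₁.parts}, Sum.inl 0 ∉ w.val →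
      ∃ (b : {B // B ∈ π₂.parts}) (m : Fin n),
        Sum.inl m ∈ w.val ∧ (∀ i, Sum.inl i ∈ w.val → i ≤ m) ∧ Sum.inl m ∈ b.val ∧
          parent (Sum.inl w) = Sum.inr b) :
    ∀ v, ∃ k : ℕ, parent^[k] v = Sum.inl ⟨R, hR⟩ :=
  stmt_11_general n f₁ f₃ h₁ h₁inv π₁ π₂ hπ₁ hπ₂ R hR hR0 parent hparentB hparentW
end
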